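/- Let [X,d,m] be an m-connected metric random walk space with an invariant and reversible probability measure ν. If λ ≠ 0 is an m-eigenvalue of the 1-Laplacian Δ₁^m, i.e., there exists u ∈ L²(X,ν) such that (λ,u) is an m-eigenpair of Δ₁^m, then h_m(X) ≤ λ. -/

import Mathlib

open MeasureTheory ENNReal Filter Set Topology

noncomputable section

variable {X : Type*} [MeasurableSpace X]

/-- The double integral `∫∫ |u(y) − u(x)| dm_x(y) dν(x)`. -/
def nlEnergy (m : X → Measure X) (ν : Measure X) (u : X → ℝ) : ℝ≥0∞ :=
  ∫⁻ x, ∫⁻ y, ENNReal.ofReal |u y - u x| ∂(m x) ∂ν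

/-- The `m`-total variation `TV_m(u) = (1/2) ∫∫ |u(y) − u(x)| dm_x(y) dν(x)`. -/
def TVm (m : X → Measure X) (ν : Measure X) (u : X → ℝ) : ℝ≥0∞ :=
  2⁻¹ * nlEnergy m ν u

/-- `u ∈ BV_m(X,ν)`: a measurable function with finite nonlocal energy. -/
def MemBVm (m : X → Measure X) (ν : Measure X) (u : X → ℝ) : Prop :=
  Measurable u ∧ nlEnergy m ν u < ⊤

/-- `u ∈ BV_m^0(X,ν)`: `u ∈ BV_m(X,ν)` vanishing a.e. outside a set `A` with `0 < ν A < ν X`. -/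
def MemBVm0 (m : X → Measure X) (ν : Measure X) (u : X → ℝ) : Prop :=
  MemBVm m ν u ∧ ∃ A : Set X, MeasurableSet A ∧ 0 < ν A ∧ ν A < ν Set.univ ∧
    ∀ᵐ x ∂ν, x ∉ A → u x = 0

/-- The `m`-interaction `L_m(A,B) = ∫_A m_x(B) dν(x)`. -/
def Lm (m : X → Measure X) (ν : Measure X) (A B : Set X) : ℝ≥0∞ :=
  ∫⁻ x in A, m x B ∂ν

/-- The `m`-perimeter `P_m(E) = L_m(E, X∖E)`. -/
def Pm (m : X → Measure X) (ν : Measure X) (E : Set X) : ℝ≥0∞ :=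
  Lm m ν E Eᶜ

/-- `ν` is invariant and reversible for `m`. -/
def Reversible (m : X → Measure X) (ν : Measure X) : Prop :=
  ∀ F : X → X → ℝ≥0∞, Measurable (Function.uncurry F) →
    ∫⁻ x, ∫⁻ y, F x y ∂(m x) ∂ν = ∫⁻ y, ∫⁻ x, F x y ∂(m y) ∂ν

/-- `x ↦ m_x(A)` is measurable for every Borel set `A`. -/
def MeasurableKernel (m : X → Measure X) : Prop :=
  ∀ A : Set X, MeasurableSet A → Measurable fun x => m x A

/-- The measure `ν ⊗ m_x` on `X × X`, given by `(ν ⊗ m_x)(U) = ∫ m_x(U_x) dν(x)`. -/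
def nuOtimes (m : X → Measure X) (ν : Measure X) : Measure (X × X) :=
  ν.bind fun x => (m x).map (Prod.mk x)

/-- The `m`-divergence `div_m z (x) = (1/2) ∫ (z(x,y) − z(y,x)) dm_x(y)`. -/
def divm (m : X → Measure X) (z : X → X → ℝ) (x : X) : ℝ :=
  2⁻¹ * ∫ y, (z x y - z y x) ∂(m x)

/-- The multivalued sign function. -/
def signSet (r : ℝ) : Set ℝ :=
  if 0 < r then {1} else if r < 0 then {-1} else Set.Icc (-1) 1

/-- `[X,d,m]` is `m`-connected with respect to `ν`. -/
def MConnected (m : X → Measure X) (ν : Measure X) : Prop :=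
  ∀ A B : Set X, MeasurableSet A → MeasurableSet B → 0 < ν A → 0 < ν B →
    A ∪ B = Set.univ → 0 < Lm m ν A B

/-- `ν` is ergodic for `m`. -/
def ErgodicRW (m : X → Measure X) (ν : Measure X) : Prop :=
  ∀ B : Set X, MeasurableSet B → (∀ x ∈ B, m x B = 1) → ν B = 0 ∨ ν B = 1

/-- `v ∈ ∂F_m(u)`, where `F_m(w) = TV_m(w)` for `w ∈ L² ∩ BV_m` and `+∞` otherwise.
This unfolds the subdifferential inequality: it forces `F_m(u) < ∞` and the inequality
is trivial for test functions `w` with `F_m(w) = ∞`. -/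
def subdiffFm (m : X → Measure X) (ν : Measure X) (u v : X → ℝ) : Prop :=
  MemLp u 2 ν ∧ MemLp v 2 ν ∧ MemBVm m ν u ∧
    ∀ w : X → ℝ, MemLp w 2 ν → MemBVm m ν w →
      (TVm m ν u).toReal + ∫ x, v x * (w x - u x) ∂ν ≤ (TVm m ν w).toReal

/-- `(λ, u)` is an `m`-eigenpair of the 1-Laplacian. -/
def IsEigenpair (m : X → Measure X) (ν : Measure X) (lam : ℝ) (u : X → ℝ) : Prop :=
  eLpNorm u 1 ν = 1 ∧
    ∃ ξ : X → ℝ, MemLp ξ ⊤ ν ∧ (∀ᵐ x ∂ν, ξ x ∈ signSet (u x)) ∧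
      subdiffFm m ν u fun x => lam * ξ x

/-- The `m`-Cheeger constant of a set `Ω`. -/
def h1m (m : X → Measure X) (ν : Measure X) (Ω : Set X) : ℝ≥0∞ :=
  sInf {r : ℝ≥0∞ | ∃ E : Set X, MeasurableSet E ∧ E ⊆ Ω ∧ 0 < ν E ∧ r = Pm m ν E / ν E}

/-- `Ω` is `m`-calibrable. -/
def Calibrable (m : X → Measure X) (ν : Measure X) (Ω : Set X) : Prop :=
  h1m m ν Ω = Pm m ν Ω / ν Ω

/-- The `m`-Cheeger constant of the whole space (for a probability measure `ν`). -/
def cheegerConst (m : X → Measure X) (ν : Measure X) : ℝ≥0∞ :=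
  sInf {r : ℝ≥0∞ | ∃ D : Set X, MeasurableSet D ∧ 0 < ν D ∧ ν D < 1 ∧
    r = Pm m ν D / min (ν D) (ν Dᶜ)}

/-- The Dirichlet energy functional `H_m(u) = (1/2) ∫∫ (u(x) − u(y))² dm_x(y) dν(x)`. -/
def Hm (m : X → Measure X) (ν : Measure X) (u : X → ℝ) : ℝ≥0∞ :=
  2⁻¹ * ∫⁻ x, ∫⁻ y, ENNReal.ofReal ((u x - u y) ^ 2) ∂(m x) ∂ν

end

/-!
Testing the subdifferential inequality for `λξ ∈ ∂F_m(u)` with `w = 0`, `w = 2u` and `w = u + c`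
gives `TV_m(u) = ∫ λξu = λ‖u‖₁ = λ` and `λ ∫ ξ = 0`; since `λ ≠ 0` and `ξ = sign u`, `0` is a
median of `u`. Write `E_t = {u > t}`. From `|b - a| = |Iio a ∆ Iio b|` and Tonelli one gets the
coarea formula `TV_m(u) = ∫ P_m(E_t) dt` (reversibility identifies `L_m(E_tᶜ, E_t)` with
`P_m(E_t)`) and the layer-cake formula `1 = ‖u‖₁ = ∫ ν(E_t ∆ {t < 0}) dt`. As `0` is a median,
the last integrand is at most `min(ν E_t, ν E_tᶜ)`, so
`h_m ≤ ∫ h_m min(ν E_t, ν E_tᶜ) dt ≤ ∫ P_m(E_t) dt = λ`.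
-/

open ProbabilityTheory
open scoped symmDiff

section Coarea

variable {α : Type*} [MeasurableSpace α]

lemma volume_Iio_symmDiff_Iio (a b : ℝ) :
    volume (Iio a ∆ Iio b) = ENNReal.ofReal |a - b| := by
  have hdiff : ∀ c d : ℝ, Iio c \ Iio d = Ico d c := fun c d => by
    ext t
    simp
  rw [measure_symmDiff_eq measurableSet_Iio.nullMeasurableSet measurableSet_Iio.nullMeasurableSet,
    hdiff, hdiff, Real.volume_Ico, Real.volume_Ico]
  rcases le_total a b with h | h
  · rw [ENNReal.ofReal_of_nonpos (sub_nonpos.2 h), zero_add, abs_of_nonpos (sub_nonpos.2 h),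
      neg_sub]
  · rw [ENNReal.ofReal_of_nonpos (sub_nonpos.2 h), add_zero, abs_of_nonneg (sub_nonneg.2 h)]

lemma lintegral_ofReal_abs_sub_eq_lintegral_measure_symmDiff (ρ : Measure α) [SFinite ρ]
    {f g : α → ℝ} (hf : Measurable f) (hg : Measurable g) :
    ∫⁻ a, ENNReal.ofReal |f a - g a| ∂ρ = ∫⁻ t, ρ ({a | t < f a} ∆ {a | t < g a}) := by
  have hS : MeasurableSet ({q : α × ℝ | q.2 < f q.1} ∆ {q | q.2 < g q.1}) :=
    (measurableSet_lt measurable_snd (hf.comp measurable_fst)).symmDiff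
      (measurableSet_lt measurable_snd (hg.comp measurable_fst))
  calc ∫⁻ a, ENNReal.ofReal |f a - g a| ∂ρ
      = ∫⁻ a, volume (Iio (f a) ∆ Iio (g a)) ∂ρ := by simp_rw [volume_Iio_symmDiff_Iio]
    _ = (ρ.prod volume) ({q : α × ℝ | q.2 < f q.1} ∆ {q | q.2 < g q.1}) :=
      (Measure.prod_apply hS).symm
    _ = ∫⁻ t, ρ ({a | t < f a} ∆ {a | t < g a}) := Measure.prod_apply_symm hS

end Coarea

section Kernel

variable {X : Type*} [MeasurableSpace X] (κ : Kernel X X) [IsSFiniteKernel κ]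
  (ν : Measure X) [SFinite ν]

lemma Lm_eq_compProd_apply_prod {A B : Set X} (hA : MeasurableSet A) (hB : MeasurableSet B) :
    Lm κ ν A B = (ν ⊗ₘ κ) (A ×ˢ B) :=
  (Measure.compProd_apply_prod hA hB).symm

lemma Reversible.Lm_comm (hrev : Reversible κ ν) {A B : Set X} (hA : MeasurableSet A)
    (hB : MeasurableSet B) : Lm κ ν A B = Lm κ ν B A := by
  have hAB : Measurable ((A ×ˢ B).indicator (1 : X × X → ℝ≥0∞)) :=
    measurable_one.indicator (hA.prod hB)
  have hBA : Measurable ((B ×ˢ A).indicator (1 : X × X → ℝ≥0∞)) :=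
    measurable_one.indicator (hB.prod hA)
  rw [Lm_eq_compProd_apply_prod κ ν hA hB, Lm_eq_compProd_apply_prod κ ν hB hA,
    ← lintegral_indicator_one (hA.prod hB), ← lintegral_indicator_one (hB.prod hA),
    Measure.lintegral_compProd hAB, Measure.lintegral_compProd hBA,
    hrev (fun x y => (A ×ˢ B).indicator 1 (x, y)) hAB]
  refine lintegral_congr fun y => lintegral_congr fun x => ?_
  rw [indicator_prod_one, indicator_prod_one, mul_comm]

lemma nlEnergy_eq_lintegral_Lm {u : X → ℝ} (hu : Measurable u) :
    nlEnergy κ ν u = ∫⁻ t, (Lm κ ν {x | t < u x}ᶜ {x | t < u x}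
      + Lm κ ν {x | t < u x} {x | t < u x}ᶜ) := by
  have hE : ∀ t : ℝ, MeasurableSet {x | t < u x} := fun t => measurableSet_lt measurable_const hu
  rw [nlEnergy, ← Measure.lintegral_compProd (f := fun p => ENNReal.ofReal |u p.2 - u p.1|)
      (by fun_prop),
    lintegral_ofReal_abs_sub_eq_lintegral_measure_symmDiff (f := fun p : X × X => u p.2)
      (g := fun p => u p.1) _ (hu.comp measurable_snd) (hu.comp measurable_fst)]
  refine lintegral_congr fun t => ?_
  have hsnd : MeasurableSet {p : X × X | t < u p.2} := hE t |>.preimage measurable_snd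
  have hfst : MeasurableSet {p : X × X | t < u p.1} := hE t |>.preimage measurable_fst
  rw [measure_symmDiff_eq hsnd.nullMeasurableSet hfst.nullMeasurableSet,
    Lm_eq_compProd_apply_prod κ ν (hE t).compl (hE t),
    Lm_eq_compProd_apply_prod κ ν (hE t) (hE t).compl]
  congr 2
  ext p
  simp [and_comm]

lemma TVm_eq_lintegral_Pm (hrev : Reversible κ ν) {u : X → ℝ} (hu : Measurable u) :
    TVm κ ν u = ∫⁻ t, Pm κ ν {x | t < u x} := by
  have hE : ∀ t : ℝ, MeasurableSet {x | t < u x} := fun t => measurableSet_lt measurable_const hu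
  have hsym : ∀ t : ℝ, Lm κ ν {x | t < u x}ᶜ {x | t < u x} + Lm κ ν {x | t < u x} {x | t < u x}ᶜ
      = 2 * Pm κ ν {x | t < u x} := fun t => by
    rw [hrev.Lm_comm κ ν (hE t).compl (hE t), Pm, two_mul]
  rw [TVm, nlEnergy_eq_lintegral_Lm κ ν hu, lintegral_congr hsym,
    lintegral_const_mul' _ _ ofNat_ne_top, ← mul_assoc,
    ENNReal.inv_mul_cancel two_ne_zero ofNat_ne_top, one_mul]

end Kernel

section Sign

variable {r s : ℝ}

lemma mem_Icc_of_mem_signSet (h : s ∈ signSet r) : s ∈ Icc (-1) 1 := by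
  unfold signSet at h
  split_ifs at h <;> simp_all

lemma eq_one_of_mem_signSet (h : s ∈ signSet r) (hr : 0 < r) : s = 1 := by
  simpa [signSet, hr] using h

lemma eq_neg_one_of_mem_signSet (h : s ∈ signSet r) (hr : r < 0) : s = -1 := by
  simpa [signSet, hr, hr.not_gt] using h

lemma mul_eq_abs_of_mem_signSet (h : s ∈ signSet r) : s * r = |r| := by
  rcases lt_trichotomy r 0 with hr | rfl | hr
  · rw [eq_neg_one_of_mem_signSet h hr, abs_of_neg hr, neg_one_mul]
  · simp
  · rw [eq_one_of_mem_signSet h hr, abs_of_pos hr, one_mul]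

end Sign

section Median

variable {α : Type*} [MeasurableSpace α] {μ : Measure α}

lemma measure_le_measure_compl_of_integral_eq_zero [IsFiniteMeasure μ] {ξ : α → ℝ} {A : Set α}
    (hA : MeasurableSet A) (hξ : Integrable ξ μ) (h0 : ∫ a, ξ a ∂μ = 0) (hge : ∀ᵐ a ∂μ, -1 ≤ ξ a)
    (hone : ∀ᵐ a ∂μ, a ∈ A → ξ a = 1) : μ A ≤ μ Aᶜ := by
  have hin : ∫ a in A, ξ a ∂μ = μ.real A := by
    rw [setIntegral_congr_ae hA hone, setIntegral_const, smul_eq_mul, mul_one]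
  have hout : -μ.real Aᶜ ≤ ∫ a in Aᶜ, ξ a ∂μ := by
    have := integral_mono_ae (μ := μ.restrict Aᶜ) (integrable_const (-1 : ℝ)) hξ.restrict
      (ae_restrict_of_ae hge)
    rwa [setIntegral_const, smul_eq_mul, mul_neg_one] at this
  have hsum := integral_add_compl hA hξ
  rw [← ENNReal.toReal_le_toReal (measure_ne_top μ A) (measure_ne_top μ Aᶜ)]
  simp only [measureReal_def] at hin hout
  linarith

-- For a probability measure this says `μ {c < u} ≤ 1/2` and `μ {u < c} ≤ 1/2`.
def IsMedian (μ : Measure α) (u : α → ℝ) (c : ℝ) : Prop :=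
  μ {x | c < u x} ≤ μ {x | c < u x}ᶜ ∧ μ {x | u x < c} ≤ μ {x | u x < c}ᶜ

lemma IsMedian.measure_symmDiff_le_min {u : α → ℝ} {c : ℝ} (h : IsMedian μ u c) (t : ℝ) :
    μ ({x | t < u x} ∆ {_x | t < c}) ≤ min (μ {x | t < u x}) (μ {x | t < u x}ᶜ) := by
  by_cases ht : t < c
  · have hlow : {x | t < u x}ᶜ ⊆ {x | u x < c} := fun x (hx : ¬t < u x) =>
      (not_lt.1 hx).trans_lt ht
    have hup : {x | u x < c}ᶜ ⊆ {x | t < u x} := fun x (hx : ¬u x < c) =>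
      ht.trans_le (not_lt.1 hx)
    simp only [ht, ofPred_true, ← top_eq_univ, symmDiff_top, hnot_eq_compl]
    exact le_min ((measure_mono hlow).trans (h.2.trans (measure_mono hup))) le_rfl
  · have hup : {x | t < u x} ⊆ {x | c < u x} := fun x (hx : t < u x) =>
      (not_lt.1 ht).trans_lt hx
    have hlow : {x | c < u x}ᶜ ⊆ {x | t < u x}ᶜ := fun x (hx : ¬c < u x) h =>
      hx ((not_lt.1 ht).trans_lt h)
    simp only [ht, ofPred_false, ← bot_eq_empty, symmDiff_bot]
    exact le_min le_rfl ((measure_mono hup).trans (h.1.trans (measure_mono hlow)))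

end Median

lemma cheegerConst_mul_min_le_Pm {X : Type*} [MeasurableSpace X] (m : X → Measure X)
    (ν : Measure X) [IsProbabilityMeasure ν] {D : Set X} (hD : MeasurableSet D) :
    cheegerConst m ν * min (ν D) (ν Dᶜ) ≤ Pm m ν D := by
  rcases eq_or_ne (ν D) 0 with hD0 | hD0
  · simp [hD0]
  rcases eq_or_ne (ν D) 1 with hD1 | hD1
  · simp [(prob_compl_eq_zero_iff hD).2 hD1]
  exact ENNReal.mul_le_of_le_div
    (sInf_le ⟨D, hD, pos_iff_ne_zero.2 hD0, prob_le_one.lt_of_ne hD1, rfl⟩)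

section Subdifferential

variable {X : Type*} [MeasurableSpace X] {m : X → Measure X} {ν : Measure X}

lemma nlEnergy_const_mul (c : ℝ) (u : X → ℝ) :
    nlEnergy m ν (fun x => c * u x) = ENNReal.ofReal |c| * nlEnergy m ν u := by
  simp_rw [nlEnergy, ← mul_sub, abs_mul, ENNReal.ofReal_mul (abs_nonneg c)]
  rw [← lintegral_const_mul' _ _ ofReal_ne_top]
  simp_rw [← lintegral_const_mul' _ _ ofReal_ne_top]

lemma nlEnergy_add_const (u : X → ℝ) (c : ℝ) :
    nlEnergy m ν (fun x => u x + c) = nlEnergy m ν u := by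
  simp [nlEnergy]

namespace subdiffFm

variable {u v : X → ℝ}

lemma TVm_ne_top (h : subdiffFm m ν u v) : TVm m ν u ≠ ⊤ :=
  mul_ne_top (inv_ne_top.2 two_ne_zero) h.2.2.1.2.ne

lemma integral_mul_eq_TVm (h : subdiffFm m ν u v) :
    ∫ x, v x * u x ∂ν = (TVm m ν u).toReal := by
  obtain ⟨hu, -, ⟨hum, hfin⟩, hsub⟩ := h
  have h0 := hsub 0 MemLp.zero ⟨measurable_zero, by simp [nlEnergy]⟩
  have h2 := hsub (fun x => 2 * u x) (hu.const_mul 2)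
    ⟨hum.const_mul 2, by rw [nlEnergy_const_mul]; exact mul_lt_top ofReal_lt_top hfin⟩
  have hTV0 : TVm m ν 0 = 0 := by simp [TVm, nlEnergy]
  have hTV2 : (TVm m ν (fun x => 2 * u x)).toReal = 2 * (TVm m ν u).toReal := by
    simp only [TVm, nlEnergy_const_mul, toReal_mul, abs_two, toReal_ofReal zero_le_two]
    ring
  rw [hTV0, toReal_zero] at h0
  rw [hTV2] at h2
  simp only [Pi.zero_apply, zero_sub, mul_neg, integral_neg] at h0
  simp only [two_mul, add_sub_cancel_right] at h2
  linarith

lemma integral_eq_zero [IsFiniteMeasure ν] (h : subdiffFm m ν u v) : ∫ x, v x ∂ν = 0 := by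
  obtain ⟨hu, -, ⟨hum, hfin⟩, hsub⟩ := h
  have hc : ∀ c : ℝ, (∫ x, v x ∂ν) * c ≤ 0 := fun c => by
    have := hsub (fun x => u x + c) (hu.add (memLp_const c))
      ⟨hum.add_const c, by rwa [nlEnergy_add_const]⟩
    simp only [TVm, nlEnergy_add_const, add_sub_cancel_left, integral_mul_const] at this
    linarith
  linarith [hc 1, hc (-1)]

end subdiffFm

namespace IsEigenpair

variable {lam : ℝ} {u : X → ℝ}

lemma measurable (h : IsEigenpair m ν lam u) : Measurable u := by
  obtain ⟨-, -, -, -, -, -, ⟨hum, -⟩, -⟩ := h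
  exact hum

lemma lintegral_ofReal_abs_eq_one (h : IsEigenpair m ν lam u) :
    ∫⁻ x, ENNReal.ofReal |u x| ∂ν = 1 := by
  simpa [eLpNorm_one_eq_lintegral_enorm, Real.enorm_eq_ofReal_abs] using h.1

lemma TVm_eq (h : IsEigenpair m ν lam u) : TVm m ν u = ENNReal.ofReal lam := by
  have hum := h.measurable
  have habs : ∫ x, |u x| ∂ν = 1 := by
    rw [integral_eq_lintegral_of_nonneg_ae (ae_of_all _ fun x => abs_nonneg (u x))
      hum.abs.aestronglyMeasurable, h.lintegral_ofReal_abs_eq_one, toReal_one]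
  obtain ⟨-, ξ, -, hsign, hsub⟩ := h
  have hpair : ∫ x, lam * ξ x * u x ∂ν = lam := by
    calc ∫ x, lam * ξ x * u x ∂ν = ∫ x, lam * |u x| ∂ν :=
          integral_congr_ae (hsign.mono fun x hx => by
            simp only [mul_assoc, mul_eq_abs_of_mem_signSet hx])
      _ = lam := by rw [integral_const_mul, habs, mul_one]
  rw [← ofReal_toReal hsub.TVm_ne_top, ← hsub.integral_mul_eq_TVm, hpair]

lemma isMedian_zero [IsFiniteMeasure ν] (h : IsEigenpair m ν lam u) (hlam : lam ≠ 0) :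
    IsMedian ν u 0 := by
  have hum := h.measurable
  obtain ⟨-, ξ, hξ, hsign, hsub⟩ := h
  have hξ0 : ∫ x, ξ x ∂ν = 0 := by
    have := hsub.integral_eq_zero
    rw [integral_const_mul] at this
    exact (mul_eq_zero.1 this).resolve_left hlam
  have hξi : Integrable ξ ν := hξ.integrable le_top
  have hbd : ∀ᵐ x ∂ν, ξ x ∈ Icc (-1) 1 := hsign.mono fun x hx => mem_Icc_of_mem_signSet hx
  constructor
  · exact measure_le_measure_compl_of_integral_eq_zero
      (measurableSet_lt measurable_const hum) hξi hξ0 (hbd.mono fun x hx => hx.1)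
      (hsign.mono fun x hx hpos => eq_one_of_mem_signSet hx hpos)
  · refine measure_le_measure_compl_of_integral_eq_zero
      (ξ := fun x => -ξ x) (measurableSet_lt hum measurable_const) hξi.neg
      (by rw [integral_neg, hξ0, neg_zero]) (hbd.mono fun x hx => neg_le_neg hx.2)
      (hsign.mono fun x hx hneg => ?_)
    rw [eq_neg_one_of_mem_signSet hx hneg, neg_neg]

end IsEigenpair

end Subdifferential

theorem cheegerConst_le_eigenvalue_general
    {X : Type*} [MeasurableSpace X]
    (m : X → Measure X) (hprob : ∀ x, IsProbabilityMeasure (m x))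
    (hker : MeasurableKernel m)
    (ν : Measure X) [IsProbabilityMeasure ν] (hrev : Reversible m ν)
    (lam : ℝ) (hlam : lam ≠ 0)
    (u : X → ℝ) (heig : IsEigenpair m ν lam u) :
    cheegerConst m ν ≤ ENNReal.ofReal lam := by
  let κ : Kernel X X := ⟨m, Measure.measurable_of_measurable_coe m hker⟩
  have : IsMarkovKernel κ := ⟨hprob⟩
  have hu := heig.measurable
  have hmass : ∫⁻ t, ν ({x | t < u x} ∆ {_x | t < 0}) = 1 := by
    rw [← lintegral_ofReal_abs_sub_eq_lintegral_measure_symmDiff ν hu measurable_const]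
    simpa using heig.lintegral_ofReal_abs_eq_one
  calc cheegerConst m ν = cheegerConst m ν * ∫⁻ t, ν ({x | t < u x} ∆ {_x | t < 0}) := by
        rw [hmass, mul_one]
    _ ≤ ∫⁻ t, cheegerConst m ν * ν ({x | t < u x} ∆ {_x | t < 0}) := lintegral_const_mul_le _ _
    _ ≤ ∫⁻ t, Pm m ν {x | t < u x} := lintegral_mono fun t =>
        (mul_le_mul_right ((heig.isMedian_zero hlam).measure_symmDiff_le_min t) _).trans
          (cheegerConst_mul_min_le_Pm m ν (measurableSet_lt measurable_const hu))
    _ = TVm m ν u := (TVm_eq_lintegral_Pm κ ν hrev hu).symm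
    _ = ENNReal.ofReal lam := heig.TVm_eq

/-- If `λ ≠ 0` is an `m`-eigenvalue of the 1-Laplacian on an `m`-connected metric random
walk space with invariant and reversible probability measure `ν`, then `h_m(X) ≤ λ`. -/
theorem cheegerConst_le_eigenvalue
    {X : Type*} [MetricSpace X] [PolishSpace X] [MeasurableSpace X] [BorelSpace X]
    (m : X → Measure X) (hprob : ∀ x, IsProbabilityMeasure (m x))
    (hker : MeasurableKernel m)
    (ν : Measure X) [IsProbabilityMeasure ν] (hrev : Reversible m ν)
    (hconn : MConnected m ν)
    (lam : ℝ) (hlam : lam ≠ 0)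
    (u : X → ℝ) (heig : IsEigenpair m ν lam u) :
    cheegerConst m ν ≤ ENNReal.ofReal lam :=
  cheegerConst_le_eigenvalue_general m hprob hker ν hrev lam hlam u heig
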